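/- arXiv:1410.0062 — 3 statements merged into one kernel-verified Lean document; each statement's English description precedes it below -/
import Mathlib

section
/- Let (X,d) be a compact metric space, n ≥ 1, and suppose there are constants 0 < c1 < C1 such that for every 0 < ε < diam(X): c1·ε^{-n} < sup{ #X' : X' ⊆ X is ε-separated of even cardinality } ≤ C1·ε^{-n}. Then there is a constant c > 0 such that for all 0 < ε < diam(X) and all even numbers k: m_k(X,d) ≥ c·k^{(n-1)/n} and m'_ε(X,d) ≥ (c1/2)·ε^{1-n}. -/
/-- A matching on `X`: a partition of `X` into two-element subsets,
encoded as a fixed-point-free involution. -/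
def IsMatching {X : Type*} (π : X → X) : Prop :=
  Function.Involutive π ∧ ∀ x, π x ≠ x

/-- The matching number of a matching `π` with respect to `d`:
`∑_{{x,y} ∈ π} d(x,y)` (each pair is counted twice in the sum, whence the division). -/
noncomputable def matchVal {X : Type*} [Fintype X] (d : X → X → ℝ) (π : X → X) : ℝ :=
  (∑ x, d x (π x)) / 2

/-- The matching number `m(X,d)`: the minimum of `m(π,d)` over all matchings `π` on `X`. -/
noncomputable def matchNum {X : Type*} [Fintype X] (d : X → X → ℝ) : ℝ :=
  sInf {r | ∃ π : X → X, IsMatching π ∧ r = matchVal d π}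

/-- `d` is a pseudometric on `X`. -/
def IsPseudometric {X : Type*} (d : X → X → ℝ) : Prop :=
  (∀ x, d x x = 0) ∧ (∀ x y, d x y = d y x) ∧ ∀ x y z, d x z ≤ d x y + d y z

/-- `S` is `ε`-separated: distinct points of `S` are at distance at least `ε`. -/
def IsEpsSeparated {X : Type*} [MetricSpace X] (ε : ℝ) (S : Finset X) : Prop :=
  ∀ x ∈ S, ∀ y ∈ S, x ≠ y → ε ≤ dist x y

/-- The matching number `m_k(Y,d)`: the supremum, over all `k`-tuples of points of `Y`
(repetitions allowed), of the matching number of the induced pseudometric on `Fin k`. -/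
noncomputable def matchK {X : Type*} [MetricSpace X] (Y : Set X) (k : ℕ) : ℝ :=
  sSup {r | ∃ x : Fin k → X, (∀ i, x i ∈ Y) ∧
    r = matchNum (fun i j => dist (x i) (x j))}

/-- The matching number `m'_ε(Y,d)`: the supremum of `m(S,d)` over all finite
`ε`-separated subsets `S ⊆ Y` of even cardinality (`sSup ∅ = 0` in `ℝ`). -/
noncomputable def matchSep {X : Type*} [MetricSpace X] (Y : Set X) (ε : ℝ) : ℝ :=
  sSup {r | ∃ S : Finset X, ↑S ⊆ Y ∧ IsEpsSeparated ε S ∧ Even S.card ∧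
    r = matchNum (fun x y : ↥S => dist x.1 y.1)}

private def natPair (m : ℕ) : ℕ := if m % 2 = 0 then m + 1 else m - 1

private lemma natPair_lt {k m : ℕ} (hk : Even k) (hm : m < k) : natPair m < k := by
  have hk2 : k % 2 = 0 := Nat.even_iff.mp hk
  unfold natPair; split <;> omega

private lemma natPair_invol (m : ℕ) : natPair (natPair m) = m := by
  unfold natPair; split <;> split <;> omega

private lemma natPair_ne (m : ℕ) : natPair m ≠ m := by
  unfold natPair; split <;> omega

private lemma exists_matching_of_even (Y : Type*) [Fintype Y] (h : Even (Fintype.card Y)) :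
    ∃ π : Y → Y, IsMatching π := by
  let e := Fintype.equivFin Y
  set π : Y → Y := fun y => e.symm ⟨natPair (e y), natPair_lt h (e y).isLt⟩ with hπ
  have keyv : ∀ y, ((e (π y)) : ℕ) = natPair (e y) := by
    intro y
    have : e (π y) = ⟨natPair (e y), natPair_lt h (e y).isLt⟩ := e.apply_symm_apply _
    exact congrArg Fin.val this
  refine ⟨π, ?_, ?_⟩
  · intro y
    apply e.injective
    apply Fin.ext
    rw [keyv, keyv, natPair_invol]
  · intro y hy
    have h2 := keyv y
    rw [hy] at h2
    exact natPair_ne (e y) h2.symm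

private lemma le_matchNum {Y : Type*} [Fintype Y] (d : Y → Y → ℝ) (ε : ℝ)
    (heven : Even (Fintype.card Y))
    (hd : ∀ x y : Y, x ≠ y → ε ≤ d x y) :
    (Fintype.card Y : ℝ) * ε / 2 ≤ matchNum d := by
  obtain ⟨π₀, hπ₀⟩ := exists_matching_of_even Y heven
  refine le_csInf ⟨matchVal d π₀, π₀, hπ₀, rfl⟩ ?_
  rintro r ⟨π, hπ, rfl⟩
  have hsum : (Fintype.card Y : ℝ) * ε ≤ ∑ x, d x (π x) := by
    calc (Fintype.card Y : ℝ) * ε = ∑ _x : Y, ε := by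
          rw [Finset.sum_const, Finset.card_univ, nsmul_eq_mul]
      _ ≤ _ := Finset.sum_le_sum fun x _ => hd x (π x) (Ne.symm (hπ.2 x))
  unfold matchVal; linarith

private lemma matchNum_le {Y : Type*} [Fintype Y] (d : Y → Y → ℝ) (D : ℝ)
    (heven : Even (Fintype.card Y))
    (h0 : ∀ x y, 0 ≤ d x y) (hD : ∀ x y, d x y ≤ D) :
    matchNum d ≤ (Fintype.card Y : ℝ) * D / 2 := by
  obtain ⟨π₀, hπ₀⟩ := exists_matching_of_even Y heven
  have hb : BddBelow {r | ∃ π, IsMatching π ∧ r = matchVal d π} := by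
    refine ⟨0, ?_⟩
    rintro r ⟨π, hπ, rfl⟩
    have : (0:ℝ) ≤ ∑ x, d x (π x) := Finset.sum_nonneg fun x _ => h0 _ _
    unfold matchVal; linarith
  have h1 : matchNum d ≤ matchVal d π₀ := csInf_le hb ⟨π₀, hπ₀, rfl⟩
  have h2 : ∑ x, d x (π₀ x) ≤ (Fintype.card Y : ℝ) * D := by
    calc ∑ x, d x (π₀ x) ≤ ∑ _x : Y, D := Finset.sum_le_sum fun x _ => hD _ _
      _ = _ := by rw [Finset.sum_const, Finset.card_univ, nsmul_eq_mul]
  unfold matchVal at h1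
  linarith

/-- Lower bounds for matching numbers of a compact metric space whose maximal cardinality
of `ε`-separated even subsets is comparable to `ε^{-n}`. -/
theorem stmt14 {X : Type*} [MetricSpace X] [CompactSpace X] (n c1 C1 : ℝ)
    (hn : 1 ≤ n) (hc1 : 0 < c1) (hc1C1 : c1 < C1)
    (hlow : ∀ ε : ℝ, 0 < ε → ε < Metric.diam (Set.univ : Set X) →
      ∃ S : Finset X, IsEpsSeparated ε S ∧ Even S.card ∧ c1 * ε ^ (-n) < (S.card : ℝ))
    (hup : ∀ ε : ℝ, 0 < ε → ε < Metric.diam (Set.univ : Set X) →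
      ∀ S : Finset X, IsEpsSeparated ε S → Even S.card → (S.card : ℝ) ≤ C1 * ε ^ (-n)) :
    ∃ c : ℝ, 0 < c ∧ ∀ ε : ℝ, 0 < ε → ε < Metric.diam (Set.univ : Set X) →
      ∀ k : ℕ, Even k → 0 < k →
        c * (k : ℝ) ^ ((n - 1) / n) ≤ matchK (Set.univ : Set X) k ∧
        c1 / 2 * ε ^ (1 - n) ≤ matchSep (Set.univ : Set X) ε := by
  set D := Metric.diam (Set.univ : Set X) with hDdef
  by_cases hD : 0 < D
  swap
  · exact ⟨1, one_pos, fun ε hε hεD k _ _ => absurd (hε.trans hεD) hD⟩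
  have hn0 : (0:ℝ) < n := lt_of_lt_of_le one_pos hn
  have hbound : Bornology.IsBounded (Set.univ : Set X) := isCompact_univ.isBounded
  have hdistD : ∀ x y : X, dist x y ≤ D := fun x y =>
    Metric.dist_le_diam_of_mem hbound (Set.mem_univ x) (Set.mem_univ y)
  -- claim 2 : the matchSep bound
  have claim2 : ∀ ε : ℝ, 0 < ε → ε < D → c1 / 2 * ε ^ (1 - n) ≤ matchSep (Set.univ : Set X) ε := by
    intro ε hε hεD
    obtain ⟨S, hSsep, hSeven, hScard⟩ := hlow ε hε hεD
    have hcardS : Fintype.card ↥S = S.card := Fintype.card_coe S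
    have hSd : ∀ x y : ↥S, x ≠ y → ε ≤ dist x.1 y.1 := fun x y hxy =>
      hSsep x.1 x.2 y.1 y.2 (fun h => hxy (Subtype.ext h))
    have h1 : c1 / 2 * ε ^ (1 - n) ≤ matchNum (fun x y : ↥S => dist x.1 y.1) := by
      refine le_trans ?_ (le_matchNum _ ε (hcardS ▸ hSeven) hSd)
      rw [hcardS]
      have hr : ε ^ (1 - n) = ε ^ (-n) * ε := by
        rw [show (1 - n) = -n + 1 by ring, Real.rpow_add hε, Real.rpow_one]
      rw [hr]
      nlinarith [hε.le, hScard]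
    refine h1.trans (le_csSup ?_ ⟨S, Set.subset_univ _, hSsep, hSeven, rfl⟩)
    refine ⟨C1 * ε ^ (-n) * D / 2, ?_⟩
    rintro r ⟨S', hS'sub, hS'sep, hS'even, rfl⟩
    have hc := hup ε hε hεD S' hS'sep hS'even
    have h2 : matchNum (fun x y : ↥S' => dist x.1 y.1) ≤ (Fintype.card ↥S' : ℝ) * D / 2 :=
      matchNum_le _ D (by rw [Fintype.card_coe]; exact hS'even)
        (fun _ _ => dist_nonneg) (fun x y => hdistD _ _)
    rw [Fintype.card_coe] at h2
    nlinarith [hD.le]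
  -- claim 1 : the matchK bound
  set c0 : ℝ := min (c1 ^ ((1:ℝ)/n) / 2) (D / 4) with hc0
  have hc0pos : 0 < c0 :=
    lt_min (div_pos (Real.rpow_pos_of_pos hc1 _) two_pos) (by linarith)
  have claim1 : ∀ k : ℕ, Even k → 0 < k →
      c0 * (k : ℝ) ^ ((n - 1) / n) ≤ matchK (Set.univ : Set X) k := by
    intro k hk hkpos
    have hkR : (0:ℝ) < k := by exact_mod_cast hkpos
    have hk1 : (1:ℝ) ≤ k := by exact_mod_cast hkpos
    set ε := min ((c1 / k) ^ ((1:ℝ)/n)) (D/2) with hεdef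
    have hck : (0:ℝ) < c1 / k := div_pos hc1 hkR
    have hεpos : 0 < ε := lt_min (Real.rpow_pos_of_pos hck _) (by linarith)
    have hεD : ε < D := lt_of_le_of_lt (min_le_right _ _) (by linarith)
    obtain ⟨S, hSsep, hSeven, hScard⟩ := hlow ε hεpos hεD
    have hkey : (k:ℝ) ≤ c1 * ε ^ (-n) := by
      have h1 : ε ≤ (c1/k) ^ ((1:ℝ)/n) := min_le_left _ _
      have h2 : ((c1/k) ^ ((1:ℝ)/n)) ^ (-n) ≤ ε ^ (-n) :=
        Real.rpow_le_rpow_of_nonpos hεpos h1 (by linarith)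
      have h3 : ((c1/k) ^ ((1:ℝ)/n)) ^ (-n) = (k / c1 : ℝ) := by
        rw [← Real.rpow_mul hck.le, show (1/n) * (-n) = (-1:ℝ) by field_simp,
          Real.rpow_neg_one, inv_div]
      rw [h3] at h2
      calc (k:ℝ) = c1 * (k / c1) := by field_simp
        _ ≤ c1 * ε ^ (-n) := mul_le_mul_of_nonneg_left h2 hc1.le
    have hcardk : k ≤ S.card := by
      have : (k:ℝ) < S.card := lt_of_le_of_lt hkey hScard
      exact_mod_cast this.le
    obtain ⟨f⟩ : Nonempty (Fin k ↪ ↥S) :=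
      Function.Embedding.nonempty_of_card_le
        (by rw [Fintype.card_fin, Fintype.card_coe]; exact hcardk)
    set x : Fin k → X := fun i => ((f i : ↥S) : X) with hx
    have hxd : ∀ i j : Fin k, i ≠ j → ε ≤ dist (x i) (x j) := fun i j hij =>
      hSsep _ (f i).2 _ (f j).2 (fun h => hij (f.injective (Subtype.ext h)))
    have hkeven : Even (Fintype.card (Fin k)) := by rwa [Fintype.card_fin]
    have h1' : (k:ℝ) * ε / 2 ≤ matchNum (fun i j => dist (x i) (x j)) := by
      have := le_matchNum (fun i j : Fin k => dist (x i) (x j)) ε hkeven hxd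
      rwa [Fintype.card_fin] at this
    have hbdd : BddAbove {r | ∃ y : Fin k → X, (∀ i, y i ∈ (Set.univ : Set X)) ∧
        r = matchNum (fun i j => dist (y i) (y j))} := by
      refine ⟨(k:ℝ) * D / 2, ?_⟩
      rintro r ⟨y, -, rfl⟩
      have := matchNum_le (fun i j : Fin k => dist (y i) (y j)) D hkeven
        (fun _ _ => dist_nonneg) (fun _ _ => hdistD _ _)
      rwa [Fintype.card_fin] at this
    have hsup : (k:ℝ) * ε / 2 ≤ matchK (Set.univ : Set X) k :=
      h1'.trans (le_csSup hbdd ⟨x, fun _ => Set.mem_univ _, rfl⟩)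
    refine le_trans ?_ hsup
    have hrpow_nonneg : (0:ℝ) ≤ (k:ℝ) ^ ((n-1)/n) := Real.rpow_nonneg hkR.le _
    rcases min_cases ((c1 / (k:ℝ)) ^ ((1:ℝ)/n)) (D/2) with ⟨hεeq, -⟩ | ⟨hεeq, -⟩
    · have hval : (k:ℝ) * (c1/(k:ℝ)) ^ ((1:ℝ)/n) / 2
          = c1 ^ ((1:ℝ)/n) / 2 * (k:ℝ) ^ ((n-1)/n) := by
        rw [Real.div_rpow hc1.le hkR.le,
          show ((n-1)/n) = 1 - 1/n by field_simp,
          Real.rpow_sub hkR, Real.rpow_one]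
        have hkpow : (0:ℝ) < (k:ℝ) ^ ((1:ℝ)/n) := Real.rpow_pos_of_pos hkR _
        field_simp
      calc c0 * (k:ℝ) ^ ((n-1)/n)
          ≤ c1 ^ ((1:ℝ)/n) / 2 * (k:ℝ) ^ ((n-1)/n) :=
            mul_le_mul_of_nonneg_right (min_le_left _ _) hrpow_nonneg
        _ = (k:ℝ) * ε / 2 := by rw [hεdef, hεeq, hval]
    · have hk' : (k:ℝ) ^ ((n-1)/n) ≤ (k:ℝ) := by
        have := Real.rpow_le_rpow_of_exponent_le hk1
          (show (n-1)/n ≤ 1 by rw [div_le_one hn0]; linarith)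
        rwa [Real.rpow_one] at this
      calc c0 * (k:ℝ) ^ ((n-1)/n) ≤ (D/4) * (k:ℝ) :=
            mul_le_mul (min_le_right _ _) hk' hrpow_nonneg (by linarith)
        _ = (k:ℝ) * (D/2) / 2 := by ring
        _ = (k:ℝ) * ε / 2 := by rw [hεdef, hεeq]
  exact ⟨c0, hc0pos, fun ε hε hεD k hk hkpos => ⟨claim1 k hk hkpos, claim2 ε hε hεD⟩⟩
end

section
/- Let (X,d,μ) be a complete metric measure space with μ a Borel measure that is Ahlfors regular of dimension n > 1, i.e. there are constants 0 < c_A ≤ C_A with c_A·r^n ≤ μ(B(x,r)) ≤ C_A·r^n for all x ∈ X and r > 0. Then there is a constant c > 0 such that for all x ∈ X, all r > 0, all even numbers k and all 0 < ε < diam(B(x,r)): m_k(B(x,r),d) ≥ c·r·k^{(n-1)/n} and m'_ε(B(x,r),d) ≥ c·r^n·ε^{1-n}. -/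
open MeasureTheory

open ENNReal

lemma exists_isMatching {Y : Type*} [Fintype Y] (h : Even (Fintype.card Y)) :
    ∃ π : Y → Y, IsMatching π := by
  obtain ⟨m, hm⟩ := h
  have hcard : Fintype.card (Fin m × Fin 2) = Fintype.card Y := by
    simp [hm]; ring
  obtain ⟨e⟩ : Nonempty (Y ≃ Fin m × Fin 2) := ⟨(Fintype.equivOfCardEq hcard).symm⟩
  refine ⟨fun y => e.symm ((e y).1, Fin.rev (e y).2), fun y => by simp, fun y hy => ?_⟩
  have h2 : Fin.rev (e y).2 = (e y).2 := by
    have h1 := congrArg (fun z => (e z).2) hy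
    simpa using h1
  have : ∀ b : Fin 2, Fin.rev b ≠ b := by decide
  exact this _ h2

lemma le_matchNum_of_sep {Y : Type*} [Fintype Y] (d : Y → Y → ℝ) (δ : ℝ)
    (h : ∀ a b : Y, a ≠ b → δ ≤ d a b) (he : Even (Fintype.card Y)) :
    δ * (Fintype.card Y) / 2 ≤ matchNum d := by
  obtain ⟨π, hπ⟩ := exists_isMatching he
  have hne : {r | ∃ π, IsMatching π ∧ r = matchVal d π}.Nonempty := ⟨matchVal d π, π, hπ, rfl⟩
  apply le_csInf hne
  rintro b ⟨π', hπ', rfl⟩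
  have hterm : ∀ y : Y, δ ≤ d y (π' y) := fun y => h _ _ (Ne.symm (hπ'.2 y))
  have hsum : δ * (Fintype.card Y) ≤ ∑ y : Y, d y (π' y) := by
    calc δ * (Fintype.card Y) = ∑ _y : Y, δ := by
          simp [Finset.sum_const, Finset.card_univ, mul_comm]
      _ ≤ ∑ y : Y, d y (π' y) := Finset.sum_le_sum fun y _ => hterm y
  unfold matchVal
  linarith

lemma matchNum_le_of_bound {Y : Type*} [Fintype Y] (d : Y → Y → ℝ) (D : ℝ)
    (h0 : ∀ a b, 0 ≤ d a b) (hD : ∀ a b, d a b ≤ D) (he : Even (Fintype.card Y)) :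
    matchNum d ≤ (Fintype.card Y) * D / 2 := by
  obtain ⟨π, hπ⟩ := exists_isMatching he
  have hb : BddBelow {r | ∃ π, IsMatching π ∧ r = matchVal d π} := by
    refine ⟨0, ?_⟩
    rintro b ⟨π', _, rfl⟩
    exact div_nonneg (Finset.sum_nonneg fun _ _ => h0 _ _) two_pos.le
  refine le_trans (csInf_le hb ⟨π, hπ, rfl⟩) ?_
  have hsum : ∑ y : Y, d y (π y) ≤ (Fintype.card Y) * D := by
    calc ∑ y : Y, d y (π y) ≤ ∑ _y : Y, D := Finset.sum_le_sum fun y _ => hD _ _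
      _ = (Fintype.card Y) * D := by simp [Finset.sum_const, Finset.card_univ]
  unfold matchVal
  linarith

lemma packing {X : Type*} [MetricSpace X] [MeasurableSpace X] [BorelSpace X]
    (μ : Measure X) (n cA CA : ℝ) (hcA : 0 < cA) (hCA : 0 < CA)
    (hreg : ∀ (x : X) (r : ℝ), 0 < r →
      ENNReal.ofReal (cA * r ^ n) ≤ μ (Metric.closedBall x r) ∧
      μ (Metric.closedBall x r) ≤ ENNReal.ofReal (CA * r ^ n))
    (x : X) (r δ : ℝ) (hr : 0 < r) (hδ : 0 < δ) (k : ℕ)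
    (hk : (k : ℝ) * (CA * δ ^ n) ≤ cA * r ^ n) :
    ∃ S : Finset X, ↑S ⊆ Metric.closedBall x r ∧ IsEpsSeparated δ S ∧ S.card = k := by
  classical
  by_contra hcon
  push_neg at hcon
  set A : Set ℕ := {m | ∃ S : Finset X, ↑S ⊆ Metric.closedBall x r ∧ IsEpsSeparated δ S ∧
    S.card = m} with hA
  -- every admissible S has card < k
  have hlt : ∀ m ∈ A, m < k := by
    rintro m ⟨S, hS, hsep, rfl⟩
    by_contra hge
    push_neg at hge
    obtain ⟨T, hTS, hT⟩ := Finset.exists_subset_card_eq hge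
    exact hcon T ((Finset.coe_subset.mpr hTS).trans hS)
      (fun a ha b hb hab => hsep a (hTS ha) b (hTS hb) hab) hT
  have hAne : A.Nonempty := ⟨0, ∅, by simp, fun a ha => absurd ha (by simp), by simp⟩
  have hAbdd : BddAbove A := ⟨k, fun m hm => (hlt m hm).le⟩
  obtain ⟨S₀, hS₀b, hS₀sep, hS₀card⟩ := Nat.sSup_mem hAne hAbdd
  -- maximality: any point of the ball is within δ of S₀
  have hmax : ∀ y ∈ Metric.closedBall x r, ∃ s ∈ S₀, dist y s < δ := by
    intro y hy
    by_contra hno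
    push_neg at hno
    have hyS : y ∉ S₀ := fun h => absurd (hno y h) (by simpa using hδ)
    have hmem : (sSup A + 1) ∈ A := by
      refine ⟨insert y S₀, ?_, ?_, ?_⟩
      · rw [Finset.coe_insert]
        exact Set.insert_subset hy hS₀b
      · intro a ha b hb hab
        rcases Finset.mem_insert.mp ha with ha' | ha'
        · rcases Finset.mem_insert.mp hb with hb' | hb'
          · exact absurd (ha'.trans hb'.symm) hab
          · subst ha'; exact hno b hb'
        · rcases Finset.mem_insert.mp hb with hb' | hb'
          · subst hb'; rw [dist_comm]; exact hno a ha'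
          · exact hS₀sep a ha' b hb' hab
      · rw [Finset.card_insert_of_notMem hyS, hS₀card]
    have := le_csSup hAbdd hmem
    omega
  have hcover : Metric.closedBall x r ⊆ ⋃ s ∈ S₀, Metric.closedBall s δ := by
    intro y hy
    obtain ⟨s, hs, hlt'⟩ := hmax y hy
    exact Set.mem_biUnion hs (Metric.mem_closedBall.mpr hlt'.le)
  have h1 : ENNReal.ofReal (cA * r ^ n) ≤ μ (Metric.closedBall x r) := (hreg x r hr).1
  have h2 : μ (Metric.closedBall x r) ≤ ∑ s ∈ S₀, μ (Metric.closedBall s δ) :=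
    le_trans (measure_mono hcover) (measure_biUnion_finset_le _ _)
  have h3 : ∑ s ∈ S₀, μ (Metric.closedBall s δ) ≤
      (S₀.card : ℝ≥0∞) * ENNReal.ofReal (CA * δ ^ n) := by
    calc ∑ s ∈ S₀, μ (Metric.closedBall s δ)
        ≤ ∑ _s ∈ S₀, ENNReal.ofReal (CA * δ ^ n) :=
          Finset.sum_le_sum fun s _ => (hreg s δ hδ).2
      _ = (S₀.card : ℝ≥0∞) * ENNReal.ofReal (CA * δ ^ n) := by
          rw [Finset.sum_const, nsmul_eq_mul]
  have h4' : ((S₀.card : ℝ≥0∞) * ENNReal.ofReal (CA * δ ^ n)) =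
      ENNReal.ofReal ((S₀.card : ℝ) * (CA * δ ^ n)) := by
    rw [ENNReal.ofReal_mul (show (0:ℝ) ≤ (S₀.card : ℝ) by positivity), ENNReal.ofReal_natCast]
  have h4 : ENNReal.ofReal (cA * r ^ n) ≤ ENNReal.ofReal ((S₀.card : ℝ) * (CA * δ ^ n)) :=
    ((le_trans h1 (le_trans h2 h3)).trans_eq h4')
  have h5 : cA * r ^ n ≤ (S₀.card : ℝ) * (CA * δ ^ n) :=
    (ENNReal.ofReal_le_ofReal_iff (by positivity)).mp h4
  have h6 : (k : ℝ) ≤ (S₀.card : ℝ) :=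
    le_of_mul_le_mul_right (by calc (k:ℝ) * (CA * δ ^ n) ≤ cA * r ^ n := hk
      _ ≤ _ := h5) (by positivity)
  have h7 : sSup A < k := hlt _ (Nat.sSup_mem hAne hAbdd)
  rw [hS₀card] at h6
  exact absurd (Nat.cast_le.mp h6) (by omega)

lemma dist_le_of_mem_closedBall {X : Type*} [MetricSpace X] {x a b : X} {r : ℝ}
    (ha : a ∈ Metric.closedBall x r) (hb : b ∈ Metric.closedBall x r) :
    dist a b ≤ 2 * r := by
  rw [Metric.mem_closedBall] at ha hb
  calc dist a b ≤ dist a x + dist x b := dist_triangle _ _ _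
    _ ≤ r + r := add_le_add ha (by rw [dist_comm]; exact hb)
    _ = 2 * r := by ring

lemma card_bound {X : Type*} [MetricSpace X] [MeasurableSpace X] [BorelSpace X]
    (μ : Measure X) (n cA CA : ℝ) (hcA : 0 < cA) (hCA : 0 < CA)
    (hreg : ∀ (x : X) (r : ℝ), 0 < r →
      ENNReal.ofReal (cA * r ^ n) ≤ μ (Metric.closedBall x r) ∧
      μ (Metric.closedBall x r) ≤ ENNReal.ofReal (CA * r ^ n))
    (x : X) (r ε : ℝ) (hr : 0 < r) (hε : 0 < ε)
    (S : Finset X) (hS : ↑S ⊆ Metric.closedBall x r) (hsep : IsEpsSeparated ε S) :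
    (S.card : ℝ) * (cA * (ε/3) ^ n) ≤ CA * (r + ε) ^ n := by
  have hdisj : (↑S : Set X).PairwiseDisjoint (fun s => Metric.closedBall s (ε/3)) := by
    intro a ha b hb hab
    apply Metric.closedBall_disjoint_closedBall
    have := hsep a ha b hb hab
    linarith
  have hmeas : ∀ s ∈ S, MeasurableSet (Metric.closedBall s (ε/3)) :=
    fun s _ => Metric.isClosed_closedBall.measurableSet
  have hsub : (⋃ s ∈ S, Metric.closedBall s (ε/3)) ⊆ Metric.closedBall x (r + ε) := by
    intro y hy
    simp only [Set.mem_iUnion, Metric.mem_closedBall, exists_prop] at hy ⊢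
    obtain ⟨s, hs, hys⟩ := hy
    have hsx : dist s x ≤ r := hS hs
    calc dist y x ≤ dist y s + dist s x := dist_triangle _ _ _
      _ ≤ ε/3 + r := add_le_add hys hsx
      _ ≤ r + ε := by linarith
  have h1 : (S.card : ℝ≥0∞) * ENNReal.ofReal (cA * (ε/3) ^ n) ≤
      μ (Metric.closedBall x (r + ε)) := by
    calc (S.card : ℝ≥0∞) * ENNReal.ofReal (cA * (ε/3) ^ n)
        = ∑ _s ∈ S, ENNReal.ofReal (cA * (ε/3) ^ n) := by
          rw [Finset.sum_const, nsmul_eq_mul]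
      _ ≤ ∑ s ∈ S, μ (Metric.closedBall s (ε/3)) :=
          Finset.sum_le_sum fun s _ => (hreg s (ε/3) (by linarith)).1
      _ = μ (⋃ s ∈ S, Metric.closedBall s (ε/3)) :=
          (measure_biUnion_finset hdisj hmeas).symm
      _ ≤ μ (Metric.closedBall x (r + ε)) := measure_mono hsub
  have h2 : ENNReal.ofReal ((S.card : ℝ) * (cA * (ε/3) ^ n)) ≤
      ENNReal.ofReal (CA * (r + ε) ^ n) := by
    calc ENNReal.ofReal ((S.card : ℝ) * (cA * (ε/3) ^ n))
        = (S.card : ℝ≥0∞) * ENNReal.ofReal (cA * (ε/3) ^ n) := by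
          rw [ENNReal.ofReal_mul (show (0:ℝ) ≤ (S.card : ℝ) by positivity),
            ENNReal.ofReal_natCast]
      _ ≤ μ (Metric.closedBall x (r + ε)) := h1
      _ ≤ ENNReal.ofReal (CA * (r + ε) ^ n) := (hreg x (r + ε) (by linarith)).2
  exact (ENNReal.ofReal_le_ofReal_iff (by positivity)).mp h2
/-- Lower matching-number bounds for balls in a complete Ahlfors `n`-regular metric
measure space (`n > 1`). -/
theorem stmt16 {X : Type*} [MetricSpace X] [CompleteSpace X]
    [MeasurableSpace X] [BorelSpace X] (μ : Measure X)
    (n cA CA : ℝ) (hn : 1 < n) (hcA : 0 < cA) (hCA : cA ≤ CA)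
    (hreg : ∀ (x : X) (r : ℝ), 0 < r →
      ENNReal.ofReal (cA * r ^ n) ≤ μ (Metric.closedBall x r) ∧
      μ (Metric.closedBall x r) ≤ ENNReal.ofReal (CA * r ^ n)) :
    ∃ c : ℝ, 0 < c ∧ ∀ (x : X) (r : ℝ), 0 < r →
      ∀ k : ℕ, Even k →
      ∀ ε : ℝ, 0 < ε → ε < Metric.diam (Metric.closedBall x r) →
        c * r * (k : ℝ) ^ ((n - 1) / n) ≤ matchK (Metric.closedBall x r) k ∧
        c * r ^ n * ε ^ (1 - n) ≤ matchSep (Metric.closedBall x r) ε := by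
  classical
  have hn0 : (0:ℝ) < n := by linarith
  have hnne : n ≠ 0 := ne_of_gt hn0
  have hCA0 : 0 < CA := lt_of_lt_of_le hcA hCA
  set ρ := cA / CA with hρdef
  have hρ : 0 < ρ := div_pos hcA hCA0
  set c := min (ρ ^ (1/n) / 2) (cA / (4 * CA)) with hcdef
  have hc0 : 0 < c := lt_min (by positivity) (by positivity)
  refine ⟨c, hc0, ?_⟩
  intro x r hr k hk ε hε hεd
  constructor
  · -- matchK bound
    have hbddK : BddAbove {v | ∃ p : Fin k → X, (∀ i, p i ∈ Metric.closedBall x r) ∧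
        v = matchNum (fun i j => dist (p i) (p j))} := by
      refine ⟨(k : ℝ) * (2 * r) / 2, ?_⟩
      rintro v ⟨p, hp, rfl⟩
      have := matchNum_le_of_bound (fun i j => dist (p i) (p j)) (2 * r)
        (fun _ _ => dist_nonneg) (fun i j => dist_le_of_mem_closedBall (hp i) (hp j))
        (by simpa using hk)
      simpa using this
    rcases Nat.eq_zero_or_pos k with hk0 | hkpos
    · subst hk0
      have hnd : (n - 1) / n ≠ 0 := (div_pos (by linarith) hn0).ne'
      rw [show ((0:ℕ):ℝ) = (0:ℝ) from Nat.cast_zero, Real.zero_rpow hnd, mul_zero]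
      set p0 : Fin 0 → X := Fin.elim0 with hp0
      have h0 : matchNum (fun i j : Fin 0 => dist (p0 i) (p0 j)) = 0 := by
        apply le_antisymm
        · have := matchNum_le_of_bound (fun i j : Fin 0 => dist (p0 i) (p0 j)) 0
            (fun a _ => a.elim0) (fun a _ => a.elim0) (by simp)
          simpa using this
        · have := le_matchNum_of_sep (fun i j : Fin 0 => dist (p0 i) (p0 j)) 0
            (fun a _ _ => a.elim0) (by simp)
          simpa using this
      have hmem : (0:ℝ) ∈ {v | ∃ p : Fin 0 → X, (∀ i, p i ∈ Metric.closedBall x r) ∧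
          v = matchNum (fun i j => dist (p i) (p j))} :=
        ⟨p0, fun i => i.elim0, h0.symm⟩
      exact le_csSup hbddK hmem
    · have hkR : (0:ℝ) < k := by exact_mod_cast hkpos
      set δ := r * (ρ / k) ^ (1/n) with hδdef
      have hδpos : 0 < δ := by positivity
      have h1n : (1/n) * n = 1 := by field_simp
      have hδn : δ ^ n = r ^ n * (ρ / k) := by
        rw [hδdef, Real.mul_rpow hr.le (Real.rpow_nonneg (by positivity) _),
          ← Real.rpow_mul (by positivity), h1n, Real.rpow_one]
      have hpack : (k:ℝ) * (CA * δ ^ n) ≤ cA * r ^ n := by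
        rw [hδn]
        have : (k:ℝ) * (CA * (r ^ n * (ρ / k))) = cA * r ^ n := by
          rw [hρdef]; field_simp
        linarith [this.le]
      obtain ⟨S, hSb, hSsep, hScard⟩ :=
        packing μ n cA CA hcA hCA0 hreg x r δ hr hδpos k hpack
      have hcardS : Fintype.card ↥S = k := by simp [hScard]
      let e : Fin k ≃ ↥S := (Fintype.equivFinOfCardEq hcardS).symm
      set p : Fin k → X := fun i => (e i : X) with hp
      have hpmem : ∀ i, p i ∈ Metric.closedBall x r := fun i => hSb (e i).2
      have hpinj : Function.Injective p := fun i j hij => e.injective (Subtype.ext hij)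
      have hlow : δ * k / 2 ≤ matchNum (fun i j => dist (p i) (p j)) := by
        have := le_matchNum_of_sep (fun i j => dist (p i) (p j)) δ
          (fun a b hab => hSsep (p a) (e a).2 (p b) (e b).2 (fun hc => hab (hpinj hc)))
          (by simpa using hk)
        simpa using this
      have hsup : matchNum (fun i j => dist (p i) (p j)) ≤
          matchK (Metric.closedBall x r) k :=
        le_csSup hbddK ⟨p, hpmem, rfl⟩
      have hk1n : 0 < (k:ℝ) ^ (1/n) := Real.rpow_pos_of_pos hkR _
      have hkr : (k:ℝ) ^ ((n-1)/n) = k / (k:ℝ) ^ (1/n) := by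
        rw [show (n-1)/n = 1 - 1/n by rw [sub_div, div_self hnne],
          Real.rpow_sub hkR, Real.rpow_one]
      have hρk : (ρ/k) ^ (1/n) = ρ ^ (1/n) / (k:ℝ) ^ (1/n) :=
        Real.div_rpow hρ.le (by positivity) _
      have harith : c * r * (k:ℝ) ^ ((n-1)/n) ≤ δ * k / 2 := by
        rw [hkr]
        calc c * r * ((k:ℝ) / (k:ℝ) ^ (1/n))
            ≤ (ρ ^ (1/n) / 2) * r * ((k:ℝ) / (k:ℝ) ^ (1/n)) := by
              have hnn : 0 ≤ r * ((k:ℝ) / (k:ℝ) ^ (1/n)) := by positivity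
              calc c * r * ((k:ℝ) / (k:ℝ) ^ (1/n))
                  = c * (r * ((k:ℝ) / (k:ℝ) ^ (1/n))) := by ring
                _ ≤ (ρ ^ (1/n) / 2) * (r * ((k:ℝ) / (k:ℝ) ^ (1/n))) :=
                    mul_le_mul_of_nonneg_right (min_le_left _ _) hnn
                _ = (ρ ^ (1/n) / 2) * r * ((k:ℝ) / (k:ℝ) ^ (1/n)) := by ring
          _ = δ * k / 2 := by rw [hδdef, hρk]; field_simp
      exact le_trans harith (le_trans hlow hsup)
  · -- matchSep bound
    have hbddS : BddAbove {v | ∃ S : Finset X, ↑S ⊆ Metric.closedBall x r ∧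
        IsEpsSeparated ε S ∧ Even S.card ∧
        v = matchNum (fun a b : ↥S => dist a.1 b.1)} := by
      refine ⟨(CA * (r+ε) ^ n / (cA * (ε/3) ^ n)) * (2 * r) / 2, ?_⟩
      rintro v ⟨S, hSb, hSsep, hSev, rfl⟩
      have h1 := matchNum_le_of_bound (fun a b : ↥S => dist a.1 b.1) (2 * r)
        (fun _ _ => dist_nonneg)
        (fun a b => dist_le_of_mem_closedBall (hSb a.2) (hSb b.2))
        (by simpa [Fintype.card_coe] using hSev)
      have h2 : (Fintype.card ↥S : ℝ) ≤ CA * (r+ε) ^ n / (cA * (ε/3) ^ n) := by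
        rw [Fintype.card_coe, le_div_iff₀ (by positivity)]
        have := card_bound μ n cA CA hcA hCA0 hreg x r ε hr hε S hSb hSsep
        linarith
      calc matchNum (fun a b : ↥S => dist a.1 b.1)
          ≤ (Fintype.card ↥S : ℝ) * (2 * r) / 2 := h1
        _ ≤ (CA * (r+ε) ^ n / (cA * (ε/3) ^ n)) * (2 * r) / 2 := by
            have h2r : (0:ℝ) ≤ 2 * r := by linarith
            have := mul_le_mul_of_nonneg_right h2 h2r
            linarith
    have hEpos : 0 < ε ^ n := Real.rpow_pos_of_pos hε n
    have hF : ε ^ (1-n) = ε / ε ^ n := by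
      rw [Real.rpow_sub hε, Real.rpow_one]
    set T := cA * r ^ n / (CA * ε ^ n) with hTdef
    by_cases hT : 4 ≤ T
    · -- big separated family
      set K := Nat.floor T with hKdef
      set k2 := 2 * (K / 2) with hk2def
      have hTpos : 0 < T := by linarith
      have hk2K : k2 ≤ K := by omega
      have hkle : (k2:ℝ) ≤ T :=
        le_trans (by exact_mod_cast hk2K) (Nat.floor_le hTpos.le)
      have hpack : (k2:ℝ) * (CA * ε ^ n) ≤ cA * r ^ n := by
        rw [hTdef, le_div_iff₀ (by positivity)] at hkle
        linarith
      obtain ⟨S, hSb, hSsep, hScard⟩ :=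
        packing μ n cA CA hcA hCA0 hreg x r ε hr hε k2 hpack
      have heven : Even S.card := ⟨K/2, by omega⟩
      have hlow : ε * k2 / 2 ≤ matchNum (fun a b : ↥S => dist a.1 b.1) := by
        have := le_matchNum_of_sep (fun a b : ↥S => dist a.1 b.1) ε
          (fun a b hab => hSsep a.1 a.2 b.1 b.2 (fun hc => hab (Subtype.ext hc)))
          (by simpa [Fintype.card_coe] using heven)
        simpa [Fintype.card_coe, hScard] using this
      have hsup : matchNum (fun a b : ↥S => dist a.1 b.1) ≤
          matchSep (Metric.closedBall x r) ε :=
        le_csSup hbddS ⟨S, hSb, hSsep, heven, rfl⟩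
      -- k2 ≥ T/2
      have hK4 : (4:ℕ) ≤ K := Nat.le_floor (by exact_mod_cast hT)
      have hKT : T < K + 1 := Nat.lt_floor_add_one T
      have hk2K1 : K - 1 ≤ k2 := by omega
      have hk2T : T / 2 ≤ (k2:ℝ) := by
        have h1 : ((K:ℝ) - 1) ≤ (k2:ℝ) := by
          have : ((K - 1 : ℕ) : ℝ) ≤ (k2:ℝ) := by exact_mod_cast hk2K1
          have hK1 : (1:ℝ) ≤ (K:ℝ) := by exact_mod_cast Nat.one_le_iff_ne_zero.mpr (by omega)
          rw [Nat.cast_sub (by omega)] at this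
          simpa using this
        linarith
      have heq : (cA/(4*CA)) * r ^ n * (ε / ε ^ n) = ε * T / 4 := by
        rw [hTdef]; field_simp
      calc c * r ^ n * ε ^ (1-n)
          ≤ (cA/(4*CA)) * r ^ n * (ε / ε ^ n) := by
            rw [hF]
            have hnn : 0 ≤ r ^ n * (ε / ε ^ n) := by positivity
            calc c * r ^ n * (ε / ε ^ n) = c * (r ^ n * (ε / ε ^ n)) := by ring
              _ ≤ (cA/(4*CA)) * (r ^ n * (ε / ε ^ n)) :=
                  mul_le_mul_of_nonneg_right (min_le_right _ _) hnn
              _ = (cA/(4*CA)) * r ^ n * (ε / ε ^ n) := by ring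
        _ = ε * T / 4 := heq
        _ ≤ ε * k2 / 2 := by nlinarith
        _ ≤ matchSep (Metric.closedBall x r) ε := le_trans hlow hsup
    · -- two-point configuration
      push_neg at hT
      have hex : ∃ a ∈ Metric.closedBall x r, ∃ b ∈ Metric.closedBall x r,
          ε < dist a b := by
        by_contra hc
        push_neg at hc
        have := Metric.diam_le_of_forall_dist_le hε.le hc
        linarith
      obtain ⟨a, ha, b, hb, hdist⟩ := hex
      have hab : a ≠ b := by
        rintro rfl; simp at hdist; linarith
      set S : Finset X := {a, b} with hSdef
      have hScard : S.card = 2 := Finset.card_pair hab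
      have hSb : ↑S ⊆ Metric.closedBall x r := by
        rw [hSdef]
        simp only [Finset.coe_insert, Finset.coe_singleton]
        exact Set.insert_subset ha (Set.singleton_subset_iff.mpr hb)
      have hSsep : IsEpsSeparated ε S := by
        intro u hu v hv huv
        rw [hSdef] at hu hv
        rcases Finset.mem_insert.mp hu with rfl | hu' <;>
          rcases Finset.mem_insert.mp hv with rfl | hv'
        · exact absurd rfl huv
        · rw [Finset.mem_singleton] at hv'; subst hv'; exact hdist.le
        · rw [Finset.mem_singleton] at hu'; subst hu'
          rw [dist_comm]; exact hdist.le
        · rw [Finset.mem_singleton] at hu' hv'; subst hu'; subst hv'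
          exact absurd rfl huv
      have heven : Even S.card := by rw [hScard]; exact ⟨1, rfl⟩
      have hlow : ε ≤ matchNum (fun u v : ↥S => dist u.1 v.1) := by
        have := le_matchNum_of_sep (fun u v : ↥S => dist u.1 v.1) ε
          (fun u v huv => hSsep u.1 u.2 v.1 v.2 (fun hc => huv (Subtype.ext hc)))
          (by simpa [Fintype.card_coe] using heven)
        have hc2 : (Fintype.card ↥S : ℝ) = 2 := by
          rw [Fintype.card_coe, hScard]; norm_num
        rw [hc2] at this
        linarith
      have hsup : matchNum (fun u v : ↥S => dist u.1 v.1) ≤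
          matchSep (Metric.closedBall x r) ε :=
        le_csSup hbddS ⟨S, hSb, hSsep, heven, rfl⟩
      have hTlt : cA * r ^ n < 4 * (CA * ε ^ n) := by
        rw [hTdef, div_lt_iff₀ (by positivity)] at hT
        linarith
      have harith : c * r ^ n * ε ^ (1-n) ≤ ε := by
        rw [hF]
        have h1 : c * r ^ n * (ε / ε ^ n) ≤ (cA/(4*CA)) * r ^ n * (ε / ε ^ n) := by
          have hnn : 0 ≤ r ^ n * (ε / ε ^ n) := by positivity
          calc c * r ^ n * (ε / ε ^ n) = c * (r ^ n * (ε / ε ^ n)) := by ring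
            _ ≤ (cA/(4*CA)) * (r ^ n * (ε / ε ^ n)) :=
                mul_le_mul_of_nonneg_right (min_le_right _ _) hnn
            _ = (cA/(4*CA)) * r ^ n * (ε / ε ^ n) := by ring
        have h2 : (cA/(4*CA)) * r ^ n * (ε / ε ^ n) ≤ ε := by
          have hd : 0 < ε / ε ^ n := div_pos hε hEpos
          have h3 : cA * r ^ n * (ε / ε ^ n) ≤ 4 * (CA * ε ^ n) * (ε / ε ^ n) :=
            mul_le_mul_of_nonneg_right hTlt.le hd.le
          have h4 : 4 * (CA * ε ^ n) * (ε / ε ^ n) = 4 * CA * ε := by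
            field_simp
          calc (cA/(4*CA)) * r ^ n * (ε / ε ^ n)
              = (cA * r ^ n * (ε / ε ^ n)) / (4 * CA) := by ring
            _ ≤ (4 * CA * ε) / (4 * CA) := by
                have h5 : cA * r ^ n * (ε / ε ^ n) ≤ 4 * CA * ε := by
                  rw [← h4]; exact h3
                gcongr
            _ = ε := by field_simp
        exact le_trans h1 h2
      exact le_trans harith (le_trans hlow hsup)
end

section
/- For every compact metric tree (T,d_T) and every even number k, one has m_k(T,d_T) ≤ H^1(T), the 1-dimensional Hausdorff measure of T. -/
open MeasureTheory

/-- A metric space is geodesic if any two points `x`, `y` are joined by an isometric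
embedding of the interval `[0, dist x y]`. -/
def IsGeodesicSpace (T : Type*) [MetricSpace T] : Prop :=
  ∀ x y : T, ∃ γ : ℝ → T, γ 0 = x ∧ γ (dist x y) = y ∧
    ∀ s ∈ Set.Icc (0 : ℝ) (dist x y), ∀ t ∈ Set.Icc (0 : ℝ) (dist x y),
      dist (γ s) (γ t) = |s - t|

/-- The four-point (tree-likeness) condition for a metric space. -/
def FourPointCond (T : Type*) [MetricSpace T] : Prop :=
  ∀ x₁ x₂ x₃ x₄ : T, dist x₁ x₃ + dist x₂ x₄ ≤
    max (dist x₁ x₂ + dist x₃ x₄) (dist x₁ x₄ + dist x₂ x₃)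

/-- A metric tree: a complete geodesic metric space satisfying the four-point condition. -/
def IsMetricTree (T : Type*) [MetricSpace T] : Prop :=
  CompleteSpace T ∧ IsGeodesicSpace T ∧ FourPointCond T

/-! Take a matching of minimal total length and join each matched pair by a geodesic. If two of
these geodesics shared two points `p ≠ q`, re-pairing their four endpoints through `p` and `q`
would shorten the matching by `2 * dist p q`, so distinct geodesics meet in at most one point,
a set of `H¹`-measure zero. Each geodesic has `H¹`-measure at least its length, hence the length
of the matching is at most `H¹(T)`. -/

open Set

section Matching

variable {ι : Type*}

lemma Fin.isMatching_rev {k : ℕ} (hk : Even k) : IsMatching (Fin.rev : Fin k → Fin k) := by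
  refine ⟨Fin.rev_involutive, fun i h => ?_⟩
  have := congrArg Fin.val h
  rw [Fin.val_rev] at this
  obtain ⟨m, rfl⟩ := hk
  omega

lemma IsMatching.conj {π τ : ι → ι} (hπ : IsMatching π) (hτ : Function.Involutive τ) :
    IsMatching (τ ∘ π ∘ τ) := by
  refine ⟨fun t => by simp [hτ _, hπ.1 _], fun t h => hπ.2 (τ t) ?_⟩
  simpa [hτ _] using congrArg τ h

variable [Fintype ι]

lemma matchNum_le_matchVal {d : ι → ι → ℝ} (hd : ∀ i j, 0 ≤ d i j) {π : ι → ι}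
    (hπ : IsMatching π) : matchNum d ≤ matchVal d π := by
  refine csInf_le ⟨0, ?_⟩ ⟨π, hπ, rfl⟩
  rintro r ⟨π', -, rfl⟩
  exact div_nonneg (Finset.sum_nonneg fun i _ => hd _ _) zero_le_two

lemma exists_isMatching_forall_matchVal_le (d : ι → ι → ℝ) (h : ∃ π : ι → ι, IsMatching π) :
    ∃ π, IsMatching π ∧ ∀ π', IsMatching π' → matchVal d π ≤ matchVal d π' := by
  classical
  obtain ⟨π, hπmem, hπmin⟩ := Finset.exists_min_image (Finset.univ.filter IsMatching)
    (matchVal d) (by simpa [Finset.filter_nonempty_iff] using h)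
  exact ⟨π, by simpa using hπmem, fun π' hπ' => hπmin π' (by simpa using hπ')⟩

/-- Conjugating by the swap of `π a` and `c` re-pairs `{a, π a}, {c, π c}` as
`{a, c}, {π a, π c}`. -/
lemma matchVal_conj_swap [DecidableEq ι] {d : ι → ι → ℝ} (hd : ∀ i j, d i j = d j i)
    {π : ι → ι} (hπ : IsMatching π) {a c : ι} (hca : c ≠ a) (hcπa : c ≠ π a) :
    matchVal d (Equiv.swap (π a) c ∘ π ∘ Equiv.swap (π a) c) + d a (π a) + d c (π c) =
      matchVal d π + d a c + d (π a) (π c) := by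
  set τ := Equiv.swap (π a) c
  have hπa : π a ≠ a := hπ.2 a
  have hπc : π c ≠ c := hπ.2 c
  have hπcπa : π c ≠ π a := hπ.1.injective.ne hca
  have hπca : π c ≠ a := fun h => hcπa (by rw [← h, hπ.1])
  have hsum : ∑ s, d s ((τ ∘ π ∘ τ) s) = ∑ s, d (τ s) (τ (π s)) := by
    rw [← Equiv.sum_comp τ]
    simp [τ, Equiv.swap_apply_self]
  have hsupp : ∑ s, (d (τ s) (τ (π s)) - d s (π s)) =
      ∑ s ∈ {a, π a, c, π c}, (d (τ s) (τ (π s)) - d s (π s)) := by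
    refine (Finset.sum_subset (Finset.subset_univ _) fun s _ hs => ?_).symm
    simp only [Finset.mem_insert, Finset.mem_singleton, not_or] at hs
    obtain ⟨hsa, hsπa, hsc, hsπc⟩ := hs
    have h1 : π s ≠ π a := hπ.1.injective.ne hsa
    have h2 : π s ≠ c := fun h => hsπc (by rw [← h, hπ.1])
    simp [τ, Equiv.swap_apply_of_ne_of_ne, hsπa, hsc, h1, h2]
  rw [Finset.sum_sub_distrib] at hsupp
  rw [Finset.sum_insert (by simp [hπa.symm, hca.symm, hπca.symm]),
    Finset.sum_insert (by simp [hcπa.symm, hπcπa.symm]),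
    Finset.sum_pair hπc.symm] at hsupp
  simp only [matchVal, τ, Equiv.swap_apply_left, Equiv.swap_apply_right, hπ.1 _,
    Equiv.swap_apply_of_ne_of_ne hπa.symm hca.symm,
    Equiv.swap_apply_of_ne_of_ne hπcπa hπc] at hsum hsupp ⊢
  rw [hsum]
  linarith [hd a c, hd (π a) (π c), hd (π a) a, hd (π c) c, hd c a, hd (π c) (π a)]

lemma IsMatching.add_le_add_of_forall_matchVal_le {d : ι → ι → ℝ} (hd : ∀ i j, d i j = d j i)
    {π : ι → ι} (hπ : IsMatching π) (hmin : ∀ π', IsMatching π' → matchVal d π ≤ matchVal d π')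
    {a c : ι} (hca : c ≠ a) (hcπa : c ≠ π a) :
    d a (π a) + d c (π c) ≤ d a c + d (π a) (π c) := by
  classical
  have := hmin _ (hπ.conj (Equiv.swap_apply_self (π a) c))
  linarith [matchVal_conj_swap hd hπ hca hcπa]

lemma IsMatching.matchVal_eq_sum_filter_lt [LinearOrder ι] {d : ι → ι → ℝ}
    (hd : ∀ i j, d i j = d j i) {π : ι → ι} (hπ : IsMatching π) :
    matchVal d π = ∑ i ∈ Finset.univ.filter (fun i => i < π i), d i (π i) := by
  have hlt : ∀ i, ¬ i < π i ↔ π i < i := fun i => not_lt.trans (hπ.2 i).le_iff_lt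
  have hswap : ∑ i ∈ Finset.univ.filter (fun i => π i < i), d i (π i) =
      ∑ i ∈ Finset.univ.filter (fun i => i < π i), d i (π i) :=
    Finset.sum_nbij' π π (by simp [hπ.1 _]) (by simp [hπ.1 _]) (fun i _ => hπ.1 i)
      (fun i _ => hπ.1 i) (fun i _ => by rw [hπ.1, hd])
  rw [matchVal, ← Finset.sum_filter_add_sum_filter_not _ (fun i => i < π i)]
  simp only [hlt, hswap]
  ring

end Matching

section Geodesic

variable {T : Type*} [MetricSpace T]

def IsGeodesicPath (γ : ℝ → T) (x y : T) : Prop :=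
  γ 0 = x ∧ γ (dist x y) = y ∧ ∀ s ∈ Icc (0 : ℝ) (dist x y), ∀ t ∈ Icc (0 : ℝ) (dist x y),
    dist (γ s) (γ t) = |s - t|

lemma IsGeodesicSpace.exists_isGeodesicPath (hT : IsGeodesicSpace T) (x y : T) :
    ∃ γ, IsGeodesicPath γ x y :=
  hT x y

namespace IsGeodesicPath

variable {γ : ℝ → T} {x y : T}

lemma dist_left (h : IsGeodesicPath γ x y) {s : ℝ} (hs : s ∈ Icc 0 (dist x y)) :
    dist x (γ s) = s := by
  rw [← h.1, h.2.2 0 ⟨le_rfl, dist_nonneg⟩ s hs, zero_sub, abs_neg, abs_of_nonneg hs.1]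

lemma dist_add_dist_of_mem (h : IsGeodesicPath γ x y) {p : T} (hp : p ∈ γ '' Icc 0 (dist x y)) :
    dist x p + dist p y = dist x y := by
  obtain ⟨s, hs, rfl⟩ := hp
  have hsy := h.2.2 s hs _ ⟨dist_nonneg, le_rfl⟩
  rw [h.2.1, abs_of_nonpos (by linarith [hs.2])] at hsy
  rw [h.dist_left hs, hsy]
  ring

lemma dist_eq_abs_of_mem (h : IsGeodesicPath γ x y) {p q : T} (hp : p ∈ γ '' Icc 0 (dist x y))
    (hq : q ∈ γ '' Icc 0 (dist x y)) : dist p q = |dist x p - dist x q| := by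
  obtain ⟨s, hs, rfl⟩ := hp
  obtain ⟨t, ht, rfl⟩ := hq
  rw [h.dist_left hs, h.dist_left ht, h.2.2 s hs t ht]

lemma lipschitzOnWith (h : IsGeodesicPath γ x y) : LipschitzOnWith 1 γ (Icc 0 (dist x y)) :=
  LipschitzOnWith.of_dist_le_mul fun s hs t ht => by
    rw [h.2.2 s hs t ht, NNReal.coe_one, one_mul, Real.dist_eq]

lemma isCompact_image (h : IsGeodesicPath γ x y) : IsCompact (γ '' Icc 0 (dist x y)) :=
  isCompact_Icc.image_of_continuousOn h.lipschitzOnWith.continuousOn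

/-- The distance to `x` maps the path onto `[0, dist x y]` and is `1`-Lipschitz. -/
lemma ofReal_dist_le_hausdorffMeasure_image [MeasurableSpace T] [BorelSpace T]
    (h : IsGeodesicPath γ x y) :
    ENNReal.ofReal (dist x y) ≤ μH[1] (γ '' Icc 0 (dist x y)) := by
  have hsurj : Icc 0 (dist x y) ⊆ dist x '' (γ '' Icc 0 (dist x y)) :=
    fun s hs => ⟨γ s, mem_image_of_mem γ hs, h.dist_left hs⟩
  calc ENNReal.ofReal (dist x y) = μH[1] (Icc 0 (dist x y)) := by
        rw [hausdorffMeasure_real, Real.volume_Icc, sub_zero]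
    _ ≤ μH[1] (dist x '' (γ '' Icc 0 (dist x y))) := measure_mono hsurj
    _ ≤ μH[1] (γ '' Icc 0 (dist x y)) := by
        simpa using (LipschitzWith.dist_right x).hausdorffMeasure_image_le zero_le_one
          (γ '' Icc 0 (dist x y))

end IsGeodesicPath

end Geodesic

lemma dist_add_dist_add_two_mul_dist_le_or {T : Type*} [PseudoMetricSpace T] {x x' y y' p q : T}
    (hpx : dist x p + dist p x' = dist x x') (hqx : dist x q + dist q x' = dist x x')
    (hpy : dist y p + dist p y' = dist y y') (hqy : dist y q + dist q y' = dist y y')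
    (hx : dist p q = |dist x p - dist x q|) (hy : dist p q = |dist y p - dist y q|) :
    dist x y + dist x' y' + 2 * dist p q ≤ dist x x' + dist y y' ∨
      dist x y' + dist x' y + 2 * dist p q ≤ dist x x' + dist y y' := by
  have := dist_triangle x p y
  have := dist_triangle x q y
  have := dist_triangle x' p y'
  have := dist_triangle x' q y'
  have := dist_triangle x p y'
  have := dist_triangle x q y'
  have := dist_triangle x' p y
  have := dist_triangle x' q y
  have := dist_comm p y
  have := dist_comm q y
  have := dist_comm x' p
  have := dist_comm x' q
  -- `p`, `q` come in the same order along both paths (left) or in opposite orders (right)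
  rcases le_total (dist x p) (dist x q) with hxpq | hxpq <;>
    rcases le_total (dist y p) (dist y q) with hypq | hypq
  · rw [abs_of_nonpos (by linarith)] at hx hy; left; linarith
  · rw [abs_of_nonpos (by linarith)] at hx; rw [abs_of_nonneg (by linarith)] at hy
    right; linarith
  · rw [abs_of_nonneg (by linarith)] at hx; rw [abs_of_nonpos (by linarith)] at hy
    right; linarith
  · rw [abs_of_nonneg (by linarith)] at hx hy; left; linarith

section MinimalMatching

variable {ι T : Type*} [Fintype ι] [MetricSpace T] {x : ι → T} {π : ι → ι}

lemma IsMatching.subsingleton_inter_image_of_forall_matchVal_le (hπ : IsMatching π)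
    (hmin : ∀ π', IsMatching π' →
      matchVal (fun i j => dist (x i) (x j)) π ≤ matchVal (fun i j => dist (x i) (x j)) π')
    {γ : ι → ℝ → T} (hγ : ∀ i, IsGeodesicPath (γ i) (x i) (x (π i)))
    {i j : ι} (hji : j ≠ i) (hjπi : j ≠ π i) :
    (γ i '' Icc 0 (dist (x i) (x (π i))) ∩ γ j '' Icc 0 (dist (x j) (x (π j)))).Subsingleton := by
  rintro p ⟨hpi, hpj⟩ q ⟨hqi, hqj⟩
  have hd : ∀ a b, dist (x a) (x b) = dist (x b) (x a) := fun _ _ => dist_comm _ _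
  have hcross := hπ.add_le_add_of_forall_matchVal_le hd hmin hji hjπi
  have hcross' := hπ.add_le_add_of_forall_matchVal_le hd hmin
    (c := π j) (fun h => hjπi (by rw [← h, hπ.1])) (hπ.1.injective.ne hji)
  rw [hπ.1 j, dist_comm (x (π j)) (x j)] at hcross'
  have hpq : dist p q ≤ 0 := by
    rcases dist_add_dist_add_two_mul_dist_le_or
      ((hγ i).dist_add_dist_of_mem hpi) ((hγ i).dist_add_dist_of_mem hqi)
      ((hγ j).dist_add_dist_of_mem hpj) ((hγ j).dist_add_dist_of_mem hqj)
      ((hγ i).dist_eq_abs_of_mem hpi hqi) ((hγ j).dist_eq_abs_of_mem hpj hqj) with h | h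
    · linarith
    · linarith
  exact dist_le_zero.mp hpq

lemma exists_isMatching_ofReal_matchVal_le_hausdorffMeasure [LinearOrder ι]
    [MeasurableSpace T] [BorelSpace T] (hT : IsGeodesicSpace T) (x : ι → T)
    (h : ∃ π : ι → ι, IsMatching π) :
    ∃ π, IsMatching π ∧
      ENNReal.ofReal (matchVal (fun i j => dist (x i) (x j)) π) ≤ μH[1] (univ : Set T) := by
  obtain ⟨π, hπ, hmin⟩ := exists_isMatching_forall_matchVal_le _ h
  choose γ hγ using fun i => hT.exists_isGeodesicPath (x i) (x (π i))
  set S := fun i => γ i '' Icc 0 (dist (x i) (x (π i)))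
  set R := Finset.univ.filter fun i => i < π i
  have := Measure.nullSingletonClass_hausdorff T one_pos
  have hdisj : (R : Set ι).Pairwise (Function.onFun (AEDisjoint μH[1]) S) := by
    intro i hi j hj hij
    refine (hπ.subsingleton_inter_image_of_forall_matchVal_le hmin hγ hij.symm ?_).measure_zero _
    rintro rfl
    simp only [R, Finset.coe_filter, Finset.mem_univ, true_and, mem_ofPred_eq, hπ.1 i] at hi hj
    exact hi.not_gt hj
  refine ⟨π, hπ, ?_⟩
  calc ENNReal.ofReal (matchVal (fun i j => dist (x i) (x j)) π)
      = ∑ i ∈ R, ENNReal.ofReal (dist (x i) (x (π i))) := by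
        rw [hπ.matchVal_eq_sum_filter_lt fun _ _ => dist_comm _ _,
          ENNReal.ofReal_sum_of_nonneg fun _ _ => dist_nonneg]
    _ ≤ ∑ i ∈ R, μH[1] (S i) :=
        Finset.sum_le_sum fun i _ => (hγ i).ofReal_dist_le_hausdorffMeasure_image
    _ = μH[1] (⋃ i ∈ R, S i) := (measure_biUnion_finset₀ hdisj
        fun i _ => (hγ i).isCompact_image.isClosed.measurableSet.nullMeasurableSet).symm
    _ ≤ μH[1] univ := measure_mono (subset_univ _)

end MinimalMatching

theorem stmt17_general {T : Type*} [MetricSpace T]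
    [MeasurableSpace T] [BorelSpace T] (hT : IsMetricTree T)
    (k : ℕ) (hk : Even k) :
    ENNReal.ofReal (matchK (Set.univ : Set T) k) ≤ μH[1] (Set.univ : Set T) := by
  by_cases hfin : μH[1] (univ : Set T) = ⊤
  · simp [hfin]
  rw [ENNReal.ofReal_le_iff_le_toReal hfin]
  refine Real.sSup_le ?_ ENNReal.toReal_nonneg
  rintro r ⟨x, -, rfl⟩
  obtain ⟨π, hπ, hle⟩ :=
    exists_isMatching_ofReal_matchVal_le_hausdorffMeasure hT.2.1 x ⟨_, Fin.isMatching_rev hk⟩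
  exact (matchNum_le_matchVal (fun _ _ => dist_nonneg) hπ).trans
    ((ENNReal.ofReal_le_iff_le_toReal hfin).1 hle)

/-- For every compact metric tree `T` and every even `k`,
`m_k(T, d_T) ≤ H¹(T)` (the `1`-dimensional Hausdorff measure of `T`). -/
theorem stmt17 {T : Type*} [MetricSpace T] [CompactSpace T]
    [MeasurableSpace T] [BorelSpace T] (hT : IsMetricTree T)
    (k : ℕ) (hk : Even k) :
    ENNReal.ofReal (matchK (Set.univ : Set T) k) ≤ μH[1] (Set.univ : Set T) :=
  stmt17_general hT k hk
end
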